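/- arXiv:1810.05604 — 5 statements merged into one kernel-verified Lean document; each statement's English description precedes it below -/
import Mathlib

section
/- With E = ⊕_{i=1}^{k+1} (L_i ⊕ L_i^⊥) a direct sum decomposition where L_i are lines (L_{k+1}^⊥ := G, L_{k+1} omitted), and A_i : L_i → Σ_{j=1}^{i-1} L_j^⊥ linear maps with A_1 = 0, the k-dimensional subspace L = Σ_{i=1}^k Γ_{A_i} satisfies L ∩ F_{β_i} = Σ_{j=1}^i Γ_{A_j}, where F_{β_i} = Σ_{j=1}^i (L_j ⊕ L_j^⊥). In particular dim(L ∩ F_{β_i}) = i for all i. -/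
set_option maxHeartbeats 1000000


/-- With `E = ⊕_{i=1}^{k} (L_i ⊕ L_i^⊥) ⊕ G` an internal direct sum (`G = L_{k+1}^⊥`),
lines `L_i`, and linear maps `A_i : L_i → Σ_{j<i} L_j^⊥` (so `A_1 = 0`), the
`k`-dimensional subspace `LL = Σ_i Γ_{A_i}` satisfies
`LL ∩ F_{β_i} = Σ_{j ≤ i} Γ_{A_j}` where `F_{β_i} = Σ_{j ≤ i} (L_j ⊕ L_j^⊥)`;
in particular `dim (LL ∩ F_{β_i}) = i` for all `1 ≤ i ≤ k`. -/
theorem stmt_6 (k : ℕ) (E : Type*) [AddCommGroup E] [Module ℂ E] [FiniteDimensional ℂ E]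
    (L : Fin k → Submodule ℂ E) (Lp : Fin (k + 1) → Submodule ℂ E)
    (hInt : DirectSum.IsInternal (Sum.elim L Lp))
    (hL1 : ∀ i, Module.finrank ℂ (L i) = 1)
    (A : Fin k → (E →ₗ[ℂ] E))
    (hA : ∀ i : Fin k, ∀ v ∈ L i, A i v ∈
      (⨆ p : Fin (k + 1), ⨆ _ : (p : ℕ) < (i : ℕ), Lp p)) :
    ∀ i : ℕ, 1 ≤ i → i ≤ k →
      ((⨆ j : Fin k, Submodule.map (LinearMap.id + A j) (L j)) ⊓
          (⨆ j : Fin k, ⨆ _ : (j : ℕ) < i, (L j ⊔ Lp j.castSucc))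
        = ⨆ j : Fin k, ⨆ _ : (j : ℕ) < i,
            Submodule.map (LinearMap.id + A j) (L j)) ∧
      Module.finrank ℂ
        (((⨆ j : Fin k, Submodule.map (LinearMap.id + A j) (L j)) ⊓
          (⨆ j : Fin k, ⨆ _ : (j : ℕ) < i, (L j ⊔ Lp j.castSucc)) : Submodule ℂ E)) = i := by
  classical
  intro i hi1 hik
  set Γ : Fin k → Submodule ℂ E := fun j => Submodule.map (LinearMap.id + A j) (L j) with hΓdef
  set P : Submodule ℂ E := ⨆ p, Lp p with hPdef
  have hind := hInt.submodule_iSupIndep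
  have hAP : ∀ j : Fin k, ∀ v ∈ L j, A j v ∈ P := by
    intro j v hv
    exact (iSup₂_le (fun p _ => le_iSup Lp p) :
      (⨆ p : Fin (k+1), ⨆ _ : (p:ℕ) < (j:ℕ), Lp p) ≤ P) (hA j v hv)
  have hPQ : ∀ j0 : Fin k, P ≤ ⨆ s, ⨆ _ : s ≠ Sum.inl j0, Sum.elim L Lp s := by
    intro j0
    refine iSup_le fun p => ?_
    exact le_iSup₂ (f := fun s (_ : s ≠ Sum.inl j0) => Sum.elim L Lp s) (Sum.inr p) (by simp)
  -- key independence lemma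
  have keyA : ∀ (v : Fin k → E), (∀ j, v j ∈ L j) →
      ∀ (s : Set (Fin k)), (∑ j, v j) ∈ (P ⊔ ⨆ j ∈ s, L j) → ∀ j ∉ s, v j = 0 := by
    intro v hv s hsum j0 hj0
    have hQ : (P ⊔ ⨆ j ∈ s, L j) ≤ ⨆ t, ⨆ _ : t ≠ Sum.inl j0, Sum.elim L Lp t := by
      refine sup_le (hPQ j0) (iSup₂_le fun j hj => ?_)
      refine le_iSup₂ (f := fun t (_ : t ≠ Sum.inl j0) => Sum.elim L Lp t) (Sum.inl j) ?_
      simp only [ne_eq, Sum.inl.injEq]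
      rintro rfl
      exact hj0 hj
    have h1 : v j0 = (∑ j, v j) - ∑ j ∈ Finset.univ.erase j0, v j :=
      eq_sub_of_add_eq (Finset.add_sum_erase _ v (Finset.mem_univ j0))
    have h2 : (∑ j ∈ Finset.univ.erase j0, v j) ∈
        ⨆ t, ⨆ _ : t ≠ Sum.inl j0, Sum.elim L Lp t := by
      refine Submodule.sum_mem _ fun j hj => ?_
      have hjne : j ≠ j0 := Finset.ne_of_mem_erase hj
      exact le_iSup₂ (f := fun t (_ : t ≠ Sum.inl j0) => Sum.elim L Lp t) (Sum.inl j)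
        (by simpa using hjne) (hv j)
    have h3 : v j0 ∈ ⨆ t, ⨆ _ : t ≠ Sum.inl j0, Sum.elim L Lp t := by
      rw [h1]; exact sub_mem (hQ hsum) h2
    exact Submodule.disjoint_def.mp (hind (Sum.inl j0)) _ (hv j0) h3
  have hF : (⨆ j : Fin k, ⨆ _ : (j:ℕ) < i, (L j ⊔ Lp j.castSucc)) ≤
      P ⊔ ⨆ j ∈ {j : Fin k | (j:ℕ) < i}, L j := by
    refine iSup₂_le fun j hj => sup_le ?_ ?_
    · exact le_trans (le_iSup₂ (f := fun j (_ : j ∈ {j : Fin k | (j:ℕ) < i}) => L j) j hj)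
        le_sup_right
    · exact le_trans (le_iSup Lp j.castSucc) le_sup_left
  -- decomposition of elements of partial sums of graphs
  have hdecomp : ∀ (m : ℕ) (x : E), x ∈ (⨆ j : Fin k, ⨆ _ : (j:ℕ) < m, Γ j) →
      ∃ v : Fin k → E, (∀ j, v j ∈ L j) ∧ (∀ j : Fin k, ¬ (j:ℕ) < m → v j = 0) ∧
        x = ∑ j, (v j + A j (v j)) := by
    intro m x hx
    rw [Submodule.mem_iSup_iff_exists_finsupp] at hx
    obtain ⟨f, hf, hfs⟩ := hx
    have hx' : ∑ j, f j = x := by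
      rw [← hfs, Finsupp.sum]
      exact (Finset.sum_subset (Finset.subset_univ _)
        (fun j _ hj => Finsupp.notMem_support_iff.mp hj)).symm
    have hexists : ∀ j : Fin k, ∃ w, w ∈ L j ∧ (¬ (j:ℕ) < m → w = 0) ∧ f j = w + A j w := by
      intro j
      by_cases h : (j:ℕ) < m
      · have hfj := hf j
        rw [iSup_pos h] at hfj
        obtain ⟨w, hw, hwe⟩ := Submodule.mem_map.mp hfj
        refine ⟨w, hw, fun h' => absurd h h', ?_⟩
        rw [← hwe]; simp
      · have hfj := hf j
        rw [iSup_neg h] at hfj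
        have : f j = 0 := by simpa using hfj
        exact ⟨0, zero_mem _, fun _ => rfl, by simp [this]⟩
    choose v hvL hv0 hvE using hexists
    exact ⟨v, hvL, hv0, by rw [← hx']; exact Finset.sum_congr rfl fun j _ => hvE j⟩
  have hST : (⨆ j : Fin k, Γ j) = ⨆ j : Fin k, ⨆ _ : (j:ℕ) < k, Γ j := by
    refine le_antisymm (iSup_le fun j => ?_) (iSup₂_le fun j _ => le_iSup Γ j)
    exact le_iSup₂ (f := fun (j : Fin k) (_ : (j:ℕ) < k) => Γ j) j j.isLt
  have hsub : ∀ j : Fin k, (j:ℕ) < i →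
      Γ j ≤ ⨆ j' : Fin k, ⨆ _ : (j':ℕ) < i, (L j' ⊔ Lp j'.castSucc) := by
    intro j hj
    rintro x ⟨y, hy, rfl⟩
    have hmemy : (y : E) ∈ ⨆ j' : Fin k, ⨆ _ : (j':ℕ) < i, (L j' ⊔ Lp j'.castSucc) :=
      le_iSup₂ (f := fun (j' : Fin k) (_ : (j':ℕ) < i) => L j' ⊔ Lp j'.castSucc) j hj
        (Submodule.mem_sup_left hy)
    have hsup : (⨆ p : Fin (k+1), ⨆ _ : (p:ℕ) < (j:ℕ), Lp p) ≤
        ⨆ j' : Fin k, ⨆ _ : (j':ℕ) < i, (L j' ⊔ Lp j'.castSucc) := by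
      refine iSup₂_le fun p hp => ?_
      have hpi : (p:ℕ) < i := hp.trans hj
      have hpk : (p:ℕ) < k := lt_of_lt_of_le hpi hik
      have hcast : Fin.castSucc (⟨(p:ℕ), hpk⟩ : Fin k) = p := by
        apply Fin.ext; rfl
      have h1 : Lp p ≤ L ⟨(p:ℕ), hpk⟩ ⊔ Lp (Fin.castSucc ⟨(p:ℕ), hpk⟩) := by
        rw [hcast]; exact le_sup_right
      exact h1.trans (le_iSup₂ (f := fun (j' : Fin k) (_ : (j':ℕ) < i) => L j' ⊔ Lp j'.castSucc)
        ⟨(p:ℕ), hpk⟩ hpi)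
    have hmemA : A j y ∈ ⨆ j' : Fin k, ⨆ _ : (j':ℕ) < i, (L j' ⊔ Lp j'.castSucc) :=
      hsup (hA j y hy)
    have : (LinearMap.id + A j : E →ₗ[ℂ] E) y = y + A j y := by simp
    rw [this]
    exact add_mem hmemy hmemA
  -- the main equality
  have hmain : (⨆ j : Fin k, Γ j) ⊓ (⨆ j : Fin k, ⨆ _ : (j:ℕ) < i, (L j ⊔ Lp j.castSucc))
      = ⨆ j : Fin k, ⨆ _ : (j:ℕ) < i, Γ j := by
    apply le_antisymm
    · rintro x hx
      obtain ⟨hx1, hx2⟩ := Submodule.mem_inf.mp hx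
      rw [hST] at hx1
      obtain ⟨v, hvL, -, hxsum⟩ := hdecomp k x hx1
      have hsumA : (∑ j, A j (v j)) ∈ P := Submodule.sum_mem _ fun j _ => hAP j _ (hvL j)
      have hsv : (∑ j, v j) ∈ P ⊔ ⨆ j ∈ {j : Fin k | (j:ℕ) < i}, L j := by
        have hxmem := hF hx2
        have heq : (∑ j, v j) = x - ∑ j, A j (v j) := by
          rw [hxsum, Finset.sum_add_distrib]; abel
        rw [heq]
        exact sub_mem hxmem (Submodule.mem_sup_left hsumA)
      have hv0 : ∀ j : Fin k, ¬ (j:ℕ) < i → v j = 0 := fun j hj =>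
        keyA v hvL _ hsv j hj
      rw [hxsum]
      refine Submodule.sum_mem _ fun j _ => ?_
      by_cases h : (j:ℕ) < i
      · exact le_iSup₂ (f := fun (j : Fin k) (_ : (j:ℕ) < i) => Γ j) j h
          ⟨v j, hvL j, by simp⟩
      · simp [hv0 j h]
    · exact le_inf (iSup₂_le fun j _ => le_iSup Γ j) (iSup₂_le fun j hj => hsub j hj)
  -- the dimension count
  have hdim : ∀ m : ℕ, m ≤ k →
      Module.finrank ℂ ((⨆ j : Fin k, ⨆ _ : (j:ℕ) < m, Γ j : Submodule ℂ E)) = m := by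
    intro m
    induction m with
    | zero =>
      intro _
      have hbot : (⨆ j : Fin k, ⨆ _ : (j:ℕ) < 0, Γ j) = ⊥ := by simp
      rw [hbot]
      exact finrank_bot ℂ E
    | succ m ih =>
      intro hm
      have hmk : m < k := hm
      set q : Fin k := ⟨m, hmk⟩ with hq
      have hsplit : (⨆ j : Fin k, ⨆ _ : (j:ℕ) < m + 1, Γ j)
          = (⨆ j : Fin k, ⨆ _ : (j:ℕ) < m, Γ j) ⊔ Γ q := by
        apply le_antisymm
        · refine iSup₂_le fun j hj => ?_
          rcases lt_or_eq_of_le (Nat.lt_succ_iff.mp hj) with h | h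
          · exact le_trans (le_iSup₂ (f := fun (j : Fin k) (_ : (j:ℕ) < m) => Γ j) j h) le_sup_left
          · have : j = q := Fin.ext h
            rw [this]; exact le_sup_right
        · refine sup_le (iSup₂_le fun j hj =>
            le_iSup₂ (f := fun (j : Fin k) (_ : (j:ℕ) < m + 1) => Γ j) j (Nat.lt_succ_of_lt hj))
            (le_iSup₂ (f := fun (j : Fin k) (_ : (j:ℕ) < m + 1) => Γ j) q (Nat.lt_succ_self m))
      have hdisj : Disjoint (⨆ j : Fin k, ⨆ _ : (j:ℕ) < m, Γ j) (Γ q) := by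
        rw [Submodule.disjoint_def]
        intro x hx1 hx2
        obtain ⟨y, hy, hye⟩ := Submodule.mem_map.mp hx2
        obtain ⟨v, hvL, hv0, hxsum⟩ := hdecomp m x hx1
        set u : Fin k → E := Function.update v q (-y) with hu
        have huL : ∀ j, u j ∈ L j := by
          intro j
          by_cases h : j = q
          · subst h
            rw [hu, Function.update_self]
            exact neg_mem hy
          · rw [hu, Function.update_of_ne h]
            exact hvL j
        have hyx : y + A q y = x := by
          rw [← hye]; simp
        have hvq : v q = 0 := hv0 q (by simp [hq])
        have hvsum : ∑ j, v j + ∑ j, A j (v j) = x := by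
          rw [← Finset.sum_add_distrib, ← hxsum]
        have hrest : ∑ j ∈ Finset.univ \ {q}, v j = ∑ j, v j := by
          refine Finset.sum_subset Finset.sdiff_subset ?_
          intro j _ hj
          have : j = q := by simpa [Finset.mem_sdiff] using hj
          rw [this, hvq]
        have hsumu : (∑ j, u j) ∈ P ⊔ ⨆ j ∈ (∅ : Set (Fin k)), L j := by
          have heq : (∑ j, u j) = A q y - ∑ j, A j (v j) := by
            rw [hu, Finset.sum_update_of_mem (Finset.mem_univ q), hrest]
            have h3 : y + A q y = ∑ j, v j + ∑ j, A j (v j) := by rw [hyx, hvsum]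
            have h2 : ∑ j, v j = y + A q y - ∑ j, A j (v j) := by rw [h3]; abel
            rw [h2]; abel
          rw [heq]
          exact Submodule.mem_sup_left
            (sub_mem (hAP q y hy) (Submodule.sum_mem _ fun j _ => hAP j _ (hvL j)))
        have huq := keyA u huL ∅ hsumu q (Set.notMem_empty q)
        have hy0 : y = 0 := by
          have : u q = -y := by rw [hu, Function.update_self]
          rw [this] at huq
          simpa using huq
        rw [← hye, hy0]
        simp
      have hΓq : Module.finrank ℂ ((Γ q : Submodule ℂ E)) = 1 := by
        have hle : Module.finrank ℂ (Γ q : Submodule ℂ E) ≤ 1 := by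
          have h := Submodule.finrank_map_le (LinearMap.id + A q) (L q)
          rw [hL1 q] at h
          exact h
        have hne : Γ q ≠ ⊥ := by
          intro hbot
          have hLbot : L q = ⊥ := by
            rw [Submodule.eq_bot_iff]
            intro v hv
            have h1 : v + A q v = 0 := by
              have hmem : (LinearMap.id + A q : E →ₗ[ℂ] E) v ∈ Γ q := Submodule.mem_map_of_mem hv
              rw [hbot] at hmem
              simpa using hmem
            have h2 : v ∈ ⨆ s, ⨆ _ : s ≠ Sum.inl q, Sum.elim L Lp s := by
              have : v = -(A q v) := eq_neg_of_add_eq_zero_left h1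
              rw [this]
              exact neg_mem (hPQ q (hAP q v hv))
            exact Submodule.disjoint_def.mp (hind (Sum.inl q)) v hv h2
          have h := hL1 q
          rw [hLbot] at h
          simp [finrank_bot] at h
        have hpos : 0 < Module.finrank ℂ (Γ q : Submodule ℂ E) := by
          rcases Nat.eq_zero_or_pos (Module.finrank ℂ (Γ q : Submodule ℂ E)) with h | h
          · exact absurd (Submodule.finrank_eq_zero.mp h) hne
          · exact h
        omega
      have hrank := Submodule.finrank_sup_add_finrank_inf_eq
        (⨆ j : Fin k, ⨆ _ : (j:ℕ) < m, Γ j) (Γ q)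
      rw [hdisj.eq_bot, ih (le_of_lt hmk), hΓq] at hrank
      rw [hsplit]
      simpa [finrank_bot] using hrank
  exact ⟨hmain, by rw [hmain]; exact hdim i hik⟩
end

section
/- In the setting of the direct sum decomposition E = ⊕_i (L_i ⊕ L_i^⊥) ⊕ G with L_i lines, the map Φ sending a tuple of linear maps (A_2,...,A_k) with A_i : L_i → Σ_{j=1}^{i-1} L_j^⊥ to the subspace Σ_{i=1}^k Γ_{A_i} (with A_1 = 0) is injective. -/
/-!
Let `π_j` be the projection onto `L_j` along all the other summands. Since each `A'_j` takes
values in `Σ_p L_p^⊥`, which every `π_j` kills, an element `x` of `Σ_j Γ_{A'_j}` is recovered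
from its projections as `x = Σ_j (π_j x + A'_j (π_j x))`. For `x = v + A_i v` with `v ∈ L_i`
the projections are `v` in slot `i` and `0` elsewhere, so `v + A_i v = v + A'_i v`.
-/

namespace DirectSum.IsInternal

variable {R E κ : Type*} [Semiring R] [AddCommMonoid E] [Module R E] [DecidableEq κ]
  {F : κ → Submodule R E}

noncomputable def proj (h : IsInternal F) (k : κ) : E →ₗ[R] E :=
  (F k).subtype ∘ₗ component R κ (fun k => F k) k ∘ₗ
    ((LinearEquiv.ofBijective (coeLinearMap F) h).symm : E →ₗ[R] ⨁ k, F k)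

theorem proj_apply_of_mem (h : IsInternal F) {k : κ} {x : E} (hx : x ∈ F k) :
    h.proj k x = x :=
  congrArg Subtype.val (h.ofBijective_coeLinearMap_of_mem hx)

theorem proj_apply_of_mem_ne (h : IsInternal F) {k k' : κ} (hne : k' ≠ k) {x : E}
    (hx : x ∈ F k') : h.proj k x = 0 :=
  congrArg Subtype.val (h.ofBijective_coeLinearMap_of_mem_ne hne hx)

theorem iSup_comp_le_ker_proj (h : IsInternal F) {ι : Type*} {k : κ} {S : ι → κ}
    (hS : ∀ i, S i ≠ k) : ⨆ i, F (S i) ≤ LinearMap.ker (h.proj k) :=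
  iSup_le fun i _ hx => h.proj_apply_of_mem_ne (hS i) hx

end DirectSum.IsInternal

section GraphSum

variable {R E ι : Type*} [Semiring R] [AddCommGroup E] [Module R E] [Fintype ι] [DecidableEq ι]
  {L : ι → Submodule R E} {π : ι → E →ₗ[R] E}

theorem eq_sum_of_mem_iSup_map_id_add
    (hπ : ∀ i j, ∀ x ∈ L j, π i x = if i = j then x else 0) {A : ι → E →ₗ[R] E}
    (hπA : ∀ i j, ∀ x ∈ L j, π i (A j x) = 0) {x : E}
    (hx : x ∈ ⨆ j, (L j).map (LinearMap.id + A j)) :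
    x = ∑ j, (π j x + A j (π j x)) := by
  suffices h : ⨆ j, (L j).map (LinearMap.id + A j) ≤
      LinearMap.eqLocus LinearMap.id (∑ j, (LinearMap.id + A j) ∘ₗ π j) by
    simpa [LinearMap.add_comp] using h hx
  refine iSup_le fun j => Submodule.map_le_iff_le_comap.mpr fun u hu => ?_
  simp [hπ _ j u hu, hπA _ j u hu, apply_ite, Finset.sum_ite_eq']

theorem apply_eq_of_iSup_map_id_add_le
    (hπ : ∀ i j, ∀ x ∈ L j, π i x = if i = j then x else 0) {A A' : ι → E →ₗ[R] E}
    (hπA : ∀ i j, ∀ x ∈ L j, π i (A j x) = 0) (hπA' : ∀ i j, ∀ x ∈ L j, π i (A' j x) = 0)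
    (hle : ⨆ j, (L j).map (LinearMap.id + A j) ≤ ⨆ j, (L j).map (LinearMap.id + A' j))
    {i : ι} {v : E} (hv : v ∈ L i) : A i v = A' i v := by
  have hmem : (LinearMap.id + A i : E →ₗ[R] E) v ∈ ⨆ j, (L j).map (LinearMap.id + A' j) :=
    hle (Submodule.mem_iSup_of_mem i (Submodule.mem_map_of_mem hv))
  have hproj : ∀ j, π j (v + A i v) + A' j (π j (v + A i v)) =
      if j = i then v + A' i v else 0 := by
    intro j
    split_ifs with hji
    · simp [hji, hπ i i v hv, hπA i i v hv]
    · simp [hji, hπ j i v hv, hπA j i v hv]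
  have hsum := eq_sum_of_mem_iSup_map_id_add hπ hπA' hmem
  simp only [LinearMap.add_apply, LinearMap.id_apply, hproj, Finset.sum_ite_eq',
    Finset.mem_univ, if_true] at hsum
  exact add_left_cancel hsum

end GraphSum

theorem stmt_7_general (k : ℕ) (E : Type*) [AddCommGroup E] [Module ℂ E]
    (L : Fin k → Submodule ℂ E) (Lp : Fin (k + 1) → Submodule ℂ E)
    (hInt : DirectSum.IsInternal (Sum.elim L Lp))
    (A A' : Fin k → (E →ₗ[ℂ] E))
    (hA : ∀ i : Fin k, ∀ v ∈ L i, A i v ∈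
      (⨆ p : Fin (k + 1), ⨆ _ : (p : ℕ) < (i : ℕ), Lp p))
    (hA' : ∀ i : Fin k, ∀ v ∈ L i, A' i v ∈
      (⨆ p : Fin (k + 1), ⨆ _ : (p : ℕ) < (i : ℕ), Lp p))
    (heq : (⨆ i : Fin k, Submodule.map (LinearMap.id + A i) (L i))
         = (⨆ i : Fin k, Submodule.map (LinearMap.id + A' i) (L i))) :
    ∀ i : Fin k, ∀ v ∈ L i, A i v = A' i v := by
  classical
  let π i := hInt.proj (Sum.inl i)
  have hπ : ∀ i j, ∀ x ∈ L j, π i x = if i = j then x else 0 := by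
    intro i j x hx
    split_ifs with hij
    · exact hInt.proj_apply_of_mem (hij ▸ hx)
    · exact hInt.proj_apply_of_mem_ne (k' := Sum.inl j) (by simpa using Ne.symm hij) hx
  have hπLp : ∀ i j, ∀ x ∈ ⨆ p : Fin (k + 1), ⨆ _ : (p : ℕ) < (j : ℕ), Lp p, π i x = 0 := by
    intro i j x hx
    refine hInt.iSup_comp_le_ker_proj (S := fun p : {p : Fin (k + 1) // (p : ℕ) < j} =>
      Sum.inr p.1) (fun _ => Sum.inr_ne_inl) ?_
    simpa [iSup_subtype'] using hx
  intro i v hv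
  exact apply_eq_of_iSup_map_id_add_le hπ (fun i j x hx => hπLp i j _ (hA j x hx))
    (fun i j x hx => hπLp i j _ (hA' j x hx)) heq.le hv

/-- In the direct sum `E = ⊕_i (L_i ⊕ L_i^⊥) ⊕ G` with `L_i` lines, the map `Φ`
sending a tuple of linear maps `A_i : L_i → Σ_{j<i} L_j^⊥` to the subspace
`Σ_{i=1}^k Γ_{A_i}` is injective. -/
theorem stmt_7 (k : ℕ) (E : Type*) [AddCommGroup E] [Module ℂ E] [FiniteDimensional ℂ E]
    (L : Fin k → Submodule ℂ E) (Lp : Fin (k + 1) → Submodule ℂ E)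
    (hInt : DirectSum.IsInternal (Sum.elim L Lp))
    (hL1 : ∀ i, Module.finrank ℂ (L i) = 1)
    (A A' : Fin k → (E →ₗ[ℂ] E))
    (hA : ∀ i : Fin k, ∀ v ∈ L i, A i v ∈
      (⨆ p : Fin (k + 1), ⨆ _ : (p : ℕ) < (i : ℕ), Lp p))
    (hA' : ∀ i : Fin k, ∀ v ∈ L i, A' i v ∈
      (⨆ p : Fin (k + 1), ⨆ _ : (p : ℕ) < (i : ℕ), Lp p))
    (heq : (⨆ i : Fin k, Submodule.map (LinearMap.id + A i) (L i))
         = (⨆ i : Fin k, Submodule.map (LinearMap.id + A' i) (L i))) :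
    ∀ i : Fin k, ∀ v ∈ L i, A i v = A' i v :=
  stmt_7_general k E L Lp hInt A A' hA hA' heq
end

section
/- Let B_i : Σ_{j=1}^i L_j → Σ_{j=i+1}^{k+1} L_j^⊥ be defined from maps A_j : L_j → Σ_{p=j+1}^{k+1} L_p^⊥ by B_i|_{L_j} = A_j^i, where A_j^i is A_j followed by the projection onto Σ_{p=i+1}^{k+1} L_p^⊥. Then Γ_{B_i} ⊂ Γ_{B_{i+1}} + L_{i+1}^⊥ for all 1 ≤ i ≤ k-1. -/
open Finset in
lemma aux_disj {ι : Type*} [Fintype ι] {α : Type*} [CompleteLattice α] [IsModularLattice α]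
    {f : ι → α} (hf : iSupIndep f) {P Q : ι → Prop} (h : ∀ i, P i → Q i → False) :
    Disjoint (⨆ i, ⨆ _ : P i, f i) (⨆ i, ⨆ _ : Q i, f i) := by
  classical
  have key : ∀ s : Finset ι, (∀ i ∈ s, ¬ Q i) → Disjoint (s.sup f) (⨆ i, ⨆ _ : Q i, f i) := by
    intro s
    induction s using Finset.induction with
    | empty => intro _; simp
    | @insert a s ha ih =>
      intro hs
      rw [Finset.sup_insert]
      have h1 : Disjoint (s.sup f) (⨆ i, ⨆ _ : Q i, f i) :=
        ih fun i hi => hs i (Finset.mem_insert_of_mem hi)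
      refine Disjoint.disjoint_sup_left_of_disjoint_sup_right h1 ?_
      have h2 : s.sup f ⊔ (⨆ i, ⨆ _ : Q i, f i) ≤ ⨆ j, ⨆ _ : j ≠ a, f j := by
        refine sup_le ?_ ?_
        · exact Finset.sup_le fun i hi =>
            le_iSup₂ (f := fun j _ => f j) i (by rintro rfl; exact ha hi)
        · exact iSup₂_le fun i hi =>
            le_iSup₂ (f := fun j _ => f j) i
              (by rintro rfl; exact hs i (Finset.mem_insert_self i s) hi)
      exact (hf a).mono_right h2
  have hle : (⨆ i, ⨆ _ : P i, f i) ≤ (Finset.univ.filter P).sup f := by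
    refine iSup₂_le fun i hi => Finset.le_sup ?_
    simp [hi]
  exact ((key (Finset.univ.filter P) (by
    intro i hi hq
    exact h i (Finset.mem_filter.1 hi).2 hq)).mono_left hle)

lemma aux_inf {ι : Type*} [Fintype ι] {α : Type*} [CompleteLattice α] [IsModularLattice α]
    {f : ι → α} (hf : iSupIndep f) (P Q : ι → Prop) :
    (⨆ i, ⨆ _ : P i, f i) ⊓ (⨆ i, ⨆ _ : Q i, f i) ≤ ⨆ i, ⨆ _ : P i ∧ Q i, f i := by
  set a := ⨆ i, ⨆ _ : P i ∧ Q i, f i with ha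
  set b := ⨆ i, ⨆ _ : P i ∧ ¬ Q i, f i with hb
  set c := ⨆ i, ⨆ _ : Q i, f i with hc
  have hsplit : (⨆ i, ⨆ _ : P i, f i) ≤ a ⊔ b := by
    refine iSup₂_le fun i hi => ?_
    by_cases hq : Q i
    · exact le_sup_of_le_left (le_iSup₂ (f := fun i _ => f i) i ⟨hi, hq⟩)
    · exact le_sup_of_le_right (le_iSup₂ (f := fun i _ => f i) i ⟨hi, hq⟩)
  have hbc : Disjoint b c := aux_disj hf fun i hi hq => hi.2 hq
  have hac : a ≤ c := iSup₂_le fun i hi => le_iSup₂ (f := fun i _ => f i) i hi.2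
  calc (⨆ i, ⨆ _ : P i, f i) ⊓ c ≤ (a ⊔ b) ⊓ c := inf_le_inf_right _ hsplit
    _ = a ⊔ (b ⊓ c) := sup_inf_assoc_of_le _ hac
    _ = a := by rw [hbc.eq_bot, sup_bot_eq]

/-- Let `B_i : Σ_{j=1}^i L_j → Σ_{j=i+1}^{k+1} L_j^⊥` be defined from maps
`A_j : L_j → Σ_{p=j+1}^{k+1} L_p^⊥` by `B_i|_{L_j} = A_j^i`, where `A_j^i` is `A_j`
followed by the projection onto `Σ_{p=i+1}^{k+1} L_p^⊥` (so that
`A_j v - B_i v ∈ Σ_{p=j+1}^{i} L_p^⊥`).  Then `Γ_{B_i} ⊂ Γ_{B_{i+1}} + L_{i+1}^⊥`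
for all `1 ≤ i ≤ k-1`. -/
theorem stmt_12 (k : ℕ) (E : Type*) [AddCommGroup E] [Module ℂ E] [FiniteDimensional ℂ E]
    (L : Fin k → Submodule ℂ E) (Lp : Fin (k + 1) → Submodule ℂ E)
    (hInt : DirectSum.IsInternal (Sum.elim L Lp))
    (hL1 : ∀ i, Module.finrank ℂ (L i) = 1)
    (SL SLp : ℕ → Submodule ℂ E)
    (hSL : ∀ j, SL j = ⨆ p : Fin k, ⨆ _ : (p : ℕ) < j, L p)
    (hSLp : ∀ i, SLp i = ⨆ p : Fin (k + 1), ⨆ _ : i ≤ (p : ℕ), Lp p)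
    (A B : Fin k → (E →ₗ[ℂ] E))
    (hA : ∀ i : Fin k, ∀ v ∈ L i, A i v ∈ SLp ((i : ℕ) + 1))
    (hB : ∀ i j : Fin k, j ≤ i → ∀ v ∈ L j,
      B i v ∈ SLp ((i : ℕ) + 1) ∧
      A j v - B i v ∈
        (⨆ p : Fin (k + 1), ⨆ _ : ((j : ℕ) < (p : ℕ) ∧ (p : ℕ) ≤ (i : ℕ)), Lp p)) :
    ∀ i : Fin k, ∀ h : (i : ℕ) + 1 < k,
      Submodule.map (LinearMap.id + B i) (SL ((i : ℕ) + 1)) ≤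
        Submodule.map (LinearMap.id + B ⟨(i : ℕ) + 1, h⟩) (SL ((i : ℕ) + 2)) ⊔
          Lp ⟨(i : ℕ) + 1, by omega⟩ := by
  intro i h
  set i' : Fin k := ⟨(i : ℕ) + 1, h⟩ with hi'
  set q : Fin (k + 1) := ⟨(i : ℕ) + 1, by omega⟩ with hq
  have hLpind : iSupIndep Lp := by
    have := hInt.submodule_iSupIndep.comp (Sum.inr_injective (α := Fin k))
    simpa [Function.comp] using this
  -- key claim : for v ∈ SL (i+1), B i v - B i' v ∈ Lp q
  have key : SL ((i : ℕ) + 1) ≤ Submodule.comap (B i - B i') (Lp q) := by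
    rw [hSL]
    refine iSup₂_le fun j hj => ?_
    intro v hv
    have hji : j ≤ i := by
      rw [Fin.le_def]; omega
    have hji' : j ≤ i' := by
      rw [Fin.le_def]; simp [hi']; omega
    obtain ⟨hB1, hB2⟩ := hB i j hji v hv
    obtain ⟨hB1', hB2'⟩ := hB i' j hji' v hv
    simp only [Submodule.mem_comap, LinearMap.sub_apply]
    have hd1 : B i v - B i' v ∈
        ⨆ p : Fin (k + 1), ⨆ _ : (i : ℕ) + 1 ≤ (p : ℕ), Lp p := by
      rw [hSLp] at hB1 hB1'
      have hB1'' : B i' v ∈ ⨆ p : Fin (k + 1), ⨆ _ : (i : ℕ) + 1 ≤ (p : ℕ), Lp p := by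
        refine (iSup₂_le fun p hp => le_iSup₂ (f := fun p _ => Lp p) p ?_ : _ ≤ _) hB1'
        simp [hi'] at hp; omega
      exact Submodule.sub_mem _ hB1 hB1''
    have hd2 : B i v - B i' v ∈
        ⨆ p : Fin (k + 1), ⨆ _ : ((j : ℕ) < (p : ℕ) ∧ (p : ℕ) ≤ (i : ℕ) + 1), Lp p := by
      have h2 : A j v - B i v ∈
          ⨆ p : Fin (k + 1), ⨆ _ : ((j : ℕ) < (p : ℕ) ∧ (p : ℕ) ≤ (i : ℕ) + 1), Lp p := by
        refine (iSup₂_le fun p hp => le_iSup₂ (f := fun p _ => Lp p) p ?_ : _ ≤ _) hB2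
        omega
      have h2' : A j v - B i' v ∈
          ⨆ p : Fin (k + 1), ⨆ _ : ((j : ℕ) < (p : ℕ) ∧ (p : ℕ) ≤ (i : ℕ) + 1), Lp p := by
        refine (iSup₂_le fun p hp => le_iSup₂ (f := fun p _ => Lp p) p ?_ : _ ≤ _) hB2'
        simp [hi'] at hp; omega
      have := Submodule.sub_mem _ h2' h2
      simpa using this
    have hmem := aux_inf hLpind (fun p => (i : ℕ) + 1 ≤ (p : ℕ))
      (fun p => (j : ℕ) < (p : ℕ) ∧ (p : ℕ) ≤ (i : ℕ) + 1) ⟨hd1, hd2⟩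
    refine (iSup₂_le fun p hp => ?_ : _ ≤ Lp q) hmem
    have : p = q := by
      rw [Fin.ext_iff]; simp [hq]; omega
    rw [this]
  -- monotonicity of SL
  have hSLmono : SL ((i : ℕ) + 1) ≤ SL ((i : ℕ) + 2) := by
    rw [hSL, hSL]
    exact iSup₂_le fun p hp => le_iSup₂ (f := fun p _ => L p) p (by omega)
  intro x hx
  obtain ⟨v, hv, rfl⟩ := Submodule.mem_map.1 hx
  have hdecomp : (LinearMap.id + B i : E →ₗ[ℂ] E) v
      = (LinearMap.id + B i' : E →ₗ[ℂ] E) v + (B i v - B i' v) := by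
    simp only [LinearMap.add_apply, LinearMap.id_apply]
    abel
  rw [hdecomp]
  refine Submodule.add_mem_sup ?_ ?_
  · exact Submodule.mem_map_of_mem (hSLmono hv)
  · exact key hv
end

section
/- Suppose (ℓ_1,...,ℓ_k) satisfies ℓ_i ∈ Gr_i(V_i^i) and ℓ_i ⊂ ℓ_{i+1} + L_{i+1}^⊥ for all i ≤ k-1. Then dim(ℓ_{i+1} ∩ V_i^{i+1}) ∈ {i, i+1}, and if the dimension is i, then ℓ_i ⊂ (ℓ_{i+1} ∩ V_i^{i+1}) + L_{i+1}^⊥. -/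
/-- Suppose `ℓ_i ∈ Gr_i(V_i^i)` and `ℓ_i ⊂ ℓ_{i+1} + L_{i+1}^⊥`.  Then
`dim (ℓ_{i+1} ∩ V_i^{i+1}) ∈ {i, i+1}`, and if the dimension equals `i` then
`ℓ_i ⊂ (ℓ_{i+1} ∩ V_i^{i+1}) + L_{i+1}^⊥`.  (1-based `i`; `L_{i+1}^⊥ = Lp ⟨i⟩`.) -/
theorem stmt_15 (k : ℕ) (E : Type*) [AddCommGroup E] [Module ℂ E] [FiniteDimensional ℂ E]
    (L : Fin k → Submodule ℂ E) (Lp : Fin (k + 1) → Submodule ℂ E)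
    (hInt : DirectSum.IsInternal (Sum.elim L Lp))
    (hL1 : ∀ i, Module.finrank ℂ (L i) = 1)
    (V : ℕ → ℕ → Submodule ℂ E)
    (hV : ∀ j i, V j i = (⨆ p : Fin k, ⨆ _ : (p : ℕ) < j, L p) ⊔
      (⨆ p : Fin (k + 1), ⨆ _ : i ≤ (p : ℕ), Lp p))
    (i : ℕ) (h1 : 1 ≤ i) (h2 : i < k)
    (ℓi ℓs : Submodule ℂ E)
    (hℓi : ℓi ≤ V i i) (hdi : Module.finrank ℂ ℓi = i)
    (hℓs : ℓs ≤ V (i + 1) (i + 1)) (hds : Module.finrank ℂ ℓs = i + 1)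
    (hinc : ℓi ≤ ℓs ⊔ Lp ⟨i, by omega⟩) :
    (Module.finrank ℂ ((ℓs ⊓ V i (i + 1) : Submodule ℂ E)) = i ∨
      Module.finrank ℂ ((ℓs ⊓ V i (i + 1) : Submodule ℂ E)) = i + 1) ∧
    (Module.finrank ℂ ((ℓs ⊓ V i (i + 1) : Submodule ℂ E)) = i →
      ℓi ≤ (ℓs ⊓ V i (i + 1)) ⊔ Lp ⟨i, by omega⟩) := by
  have hindep : iSupIndep (Sum.elim L Lp) := hInt.submodule_iSupIndep
  set f : Fin k ⊕ Fin (k + 1) → Submodule ℂ E := Sum.elim L Lp with hf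
  set Λ : Submodule ℂ E := L ⟨i, by omega⟩ with hΛ
  set P : Submodule ℂ E := Lp ⟨i, by omega⟩ with hP
  set W : Submodule ℂ E := V i (i + 1) with hWdef
  -- index set of `W`
  set SW : Set (Fin k ⊕ Fin (k + 1)) :=
    (Sum.inl '' {p | (p : ℕ) < i}) ∪ (Sum.inr '' {p | i + 1 ≤ (p : ℕ)}) with hSW
  have hWsup : W = ⨆ q ∈ SW, f q := by
    rw [hWdef, hV, hSW, iSup_union, iSup_image, iSup_image]
    rfl
  -- disjointness facts from internality
  have hPW : Disjoint P W := by
    rw [hWsup]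
    exact hindep.disjoint_biSup (x := Sum.inr ⟨i, by omega⟩) (y := SW) (by
      intro h
      simp only [hSW, Set.mem_union, Set.mem_image, Set.mem_setOf_eq] at h
      rcases h with ⟨p, hp, hpq⟩ | ⟨p, hp, hpq⟩
      · exact absurd hpq (by simp)
      · apply hp.not_gt
        have : p = ⟨i, by omega⟩ := Sum.inr.inj hpq
        simp [this])
  have hΛPW : Disjoint Λ (P ⊔ W) := by
    have : P ⊔ W = ⨆ q ∈ insert (Sum.inr ⟨i, by omega⟩ : Fin k ⊕ Fin (k + 1)) SW, f q := by
      rw [iSup_insert, hWsup]; rfl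
    rw [this]
    exact hindep.disjoint_biSup (x := Sum.inl ⟨i, by omega⟩)
      (y := insert (Sum.inr ⟨i, by omega⟩ : Fin k ⊕ Fin (k + 1)) SW) (by
      intro h
      simp only [hSW, Set.mem_insert_iff, Set.mem_union, Set.mem_image, Set.mem_setOf_eq] at h
      rcases h with hpq | ⟨p, hp, hpq⟩ | ⟨p, hp, hpq⟩
      · exact absurd hpq (by simp)
      · apply lt_irrefl i
        have : p = ⟨i, by omega⟩ := Sum.inl.inj hpq
        simpa [this] using hp
      · exact absurd hpq (by simp))
  have hPWΛ : Disjoint P (W ⊔ Λ) := by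
    have : W ⊔ Λ = ⨆ q ∈ insert (Sum.inl ⟨i, by omega⟩ : Fin k ⊕ Fin (k + 1)) SW, f q := by
      rw [iSup_insert, hWsup, sup_comm]; rfl
    rw [this]
    exact hindep.disjoint_biSup (x := Sum.inr ⟨i, by omega⟩)
      (y := insert (Sum.inl ⟨i, by omega⟩ : Fin k ⊕ Fin (k + 1)) SW) (by
      intro h
      simp only [hSW, Set.mem_insert_iff, Set.mem_union, Set.mem_image, Set.mem_setOf_eq] at h
      rcases h with hpq | ⟨p, hp, hpq⟩ | ⟨p, hp, hpq⟩
      · exact absurd hpq (by simp)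
      · exact absurd hpq (by simp)
      · apply hp.not_gt
        have : p = ⟨i, by omega⟩ := Sum.inr.inj hpq
        simp [this])
  have hΛW : Disjoint W Λ := (hΛPW.mono_right le_sup_right).symm
  -- `V (i+1) (i+1) = W ⊔ Λ`
  have hVs : V (i + 1) (i + 1) = W ⊔ Λ := by
    rw [hV, hWdef, hV]
    have : (⨆ p : Fin k, ⨆ _ : (p : ℕ) < i + 1, L p)
        = (⨆ p : Fin k, ⨆ _ : (p : ℕ) < i, L p) ⊔ Λ := by
      apply le_antisymm
      · refine iSup₂_le fun p hp => ?_
        rcases lt_or_eq_of_le (Nat.lt_succ_iff.mp hp) with h | h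
        · exact le_sup_of_le_left (le_iSup₂_of_le p h le_rfl)
        · have : p = ⟨i, by omega⟩ := Fin.ext h
          rw [this]; exact le_sup_right
      · refine sup_le (iSup₂_le fun p hp => le_iSup₂_of_le p (by omega) le_rfl) ?_
        exact le_iSup₂_of_le ⟨i, by omega⟩ (by simp) le_rfl
    rw [this]
    ac_rfl
  -- `V i i = W ⊔ P`
  have hVi : V i i = W ⊔ P := by
    rw [hV, hWdef, hV]
    have : (⨆ p : Fin (k + 1), ⨆ _ : i ≤ (p : ℕ), Lp p)
        = (⨆ p : Fin (k + 1), ⨆ _ : i + 1 ≤ (p : ℕ), Lp p) ⊔ P := by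
      apply le_antisymm
      · refine iSup₂_le fun p hp => ?_
        rcases lt_or_eq_of_le hp with h | h
        · exact le_sup_of_le_left (le_iSup₂_of_le p h le_rfl)
        · have : p = ⟨i, by omega⟩ := Fin.ext h.symm
          rw [this]; exact le_sup_right
      · refine sup_le (iSup₂_le fun p hp => le_iSup₂_of_le p (by omega) le_rfl) ?_
        exact le_iSup₂_of_le ⟨i, by omega⟩ (by simp) le_rfl
    rw [this]
    ac_rfl
  have hℓsWΛ : ℓs ≤ W ⊔ Λ := hVs ▸ hℓs
  constructor
  · -- dimension count
    have hle : Module.finrank ℂ (ℓs ⊓ W : Submodule ℂ E) ≤ i + 1 := by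
      rw [← hds]; exact Submodule.finrank_mono inf_le_left
    have heq := Submodule.finrank_sup_add_finrank_inf_eq ℓs W
    have hWΛ : Module.finrank ℂ (W ⊔ Λ : Submodule ℂ E)
        = Module.finrank ℂ W + 1 := by
      have h3 := Submodule.finrank_sup_add_finrank_inf_eq W Λ
      have hΛ1 : Module.finrank ℂ Λ = 1 := hL1 _
      rw [hΛW.eq_bot, finrank_bot, hΛ1] at h3
      omega
    have hsle : Module.finrank ℂ (ℓs ⊔ W : Submodule ℂ E)
        ≤ Module.finrank ℂ W + 1 := by
      rw [← hWΛ]; exact Submodule.finrank_mono (sup_le hℓsWΛ le_sup_left)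
    rw [hds] at heq
    omega
  · -- inclusion (holds regardless of the dimension)
    intro _
    have key : ℓi ≤ P ⊔ (ℓs ⊓ (W ⊔ P)) := by
      have h1' : ℓi ≤ (P ⊔ ℓs) ⊓ (W ⊔ P) := by
        refine le_inf ?_ (hVi ▸ hℓi)
        rw [sup_comm]; exact hinc
      rwa [sup_inf_assoc_of_le ℓs le_sup_right] at h1'
    have h2' : ℓs ⊓ (W ⊔ P) ≤ ℓs ⊓ W := by
      refine le_inf inf_le_left ?_
      have : ℓs ⊓ (W ⊔ P) ≤ (W ⊔ Λ) ⊓ (W ⊔ P) := inf_le_inf_right _ hℓsWΛ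
      refine this.trans ?_
      rw [sup_inf_assoc_of_le Λ le_sup_left]
      have : Λ ⊓ (W ⊔ P) = ⊥ := by
        rw [sup_comm]; exact hΛPW.eq_bot
      rw [this, sup_bot_eq]
    calc ℓi ≤ P ⊔ (ℓs ⊓ (W ⊔ P)) := key
      _ ≤ P ⊔ (ℓs ⊓ W) := sup_le_sup_left h2' _
      _ = (ℓs ⊓ W) ⊔ P := sup_comm _ _
end

section
/- Let T : Σ_{i=1}^k L_i → Σ_{i=1}^{k+1} L_i^⊥ be a linear map and Γ_T its graph, a k-dimensional subspace of E. Then for any subspaces ℓ_i ⊂ V_i^i of dimension i, dim(Γ_T ∩ (ℓ_i + Σ_{j=1}^i L_j^⊥)) ≤ i. -/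
/-- Let `T : Σ_{i=1}^k L_i → Σ_{i=1}^{k+1} L_i^⊥` be linear with graph `Γ_T`, a
`k`-dimensional subspace of `E`.  Then for any `i`-dimensional subspace
`ℓ_i ⊂ V_i^i`, one has `dim (Γ_T ∩ (ℓ_i + Σ_{j=1}^i L_j^⊥)) ≤ i`. -/
theorem stmt_18 (k : ℕ) (E : Type*) [AddCommGroup E] [Module ℂ E] [FiniteDimensional ℂ E]
    (L : Fin k → Submodule ℂ E) (Lp : Fin (k + 1) → Submodule ℂ E)
    (hInt : DirectSum.IsInternal (Sum.elim L Lp))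
    (hL1 : ∀ i, Module.finrank ℂ (L i) = 1)
    (SL LpLow : ℕ → Submodule ℂ E)
    (hSL : ∀ j, SL j = ⨆ p : Fin k, ⨆ _ : (p : ℕ) < j, L p)
    (hLpLow : ∀ i, LpLow i = ⨆ p : Fin (k + 1), ⨆ _ : (p : ℕ) < i, Lp p)
    (V : ℕ → ℕ → Submodule ℂ E)
    (hV : ∀ j i, V j i = (⨆ p : Fin k, ⨆ _ : (p : ℕ) < j, L p) ⊔
      (⨆ p : Fin (k + 1), ⨆ _ : i ≤ (p : ℕ), Lp p))
    (T : E →ₗ[ℂ] E)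
    (hT : ∀ v ∈ SL k, T v ∈ LpLow (k + 1)) :
    ∀ i, 1 ≤ i → i ≤ k → ∀ ℓ : Submodule ℂ E, ℓ ≤ V i i →
      Module.finrank ℂ ℓ = i →
      Module.finrank ℂ
        ((Submodule.map (LinearMap.id + T) (SL k) ⊓ (ℓ ⊔ LpLow i) : Submodule ℂ E))
        ≤ i := by
  classical
  intro i hi1 hik ℓ hℓV hrank
  have hindep : iSupIndep (Sum.elim L Lp) := hInt.submodule_iSupIndep
  -- the sum of the `L`s is disjoint from the sum of the `Lp`s
  have key : ∀ s : Finset (Fin k), Disjoint (s.sup L) (⨆ p, Lp p) := by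
    intro s
    induction s using Finset.induction_on with
    | empty => simp
    | @insert a s ha ih =>
      rw [Finset.sup_insert]
      refine Disjoint.disjoint_sup_left_of_disjoint_sup_right ih ?_
      refine (hindep (Sum.inl a)).mono_right (sup_le ?_ ?_)
      · refine Finset.sup_le fun j hj => ?_
        exact le_iSup₂_of_le (Sum.inl j)
          (fun h => ha (Sum.inl.inj h ▸ hj)) le_rfl
      · exact iSup_le fun p => le_iSup₂_of_le (Sum.inr p) (by simp) le_rfl
  have hdisj : Disjoint (⨆ p, L p) (⨆ p, Lp p) := by
    have := key Finset.univ
    simpa [Finset.sup_univ_eq_iSup] using this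
  have hSLle : SL k ≤ ⨆ p, L p := by
    rw [hSL]; exact iSup_le fun p => iSup_le fun _ => le_iSup _ _
  have hLpLe : ∀ m, LpLow m ≤ ⨆ p, Lp p := fun m => by
    rw [hLpLow]; exact iSup_le fun p => iSup_le fun _ => le_iSup _ _
  set Γ := Submodule.map (LinearMap.id + T) (SL k) with hΓ
  set C := LpLow i with hC
  -- the graph is disjoint from `LpLow i`
  have hΓC : Γ ⊓ C = ⊥ := by
    rw [eq_bot_iff]
    intro x hx
    obtain ⟨hx1, hx2⟩ := Submodule.mem_inf.mp hx
    obtain ⟨v, hv, rfl⟩ := hx1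
    have hTv : T v ∈ ⨆ p, Lp p := hLpLe _ (hT v hv)
    have hxLp := hLpLe i hx2
    rw [LinearMap.add_apply, LinearMap.id_apply] at hxLp
    have hv' : v ∈ ⨆ p, Lp p := by
      have := Submodule.sub_mem _ hxLp hTv
      simpa using this
    have hv0 : v = 0 := Submodule.disjoint_def.mp hdisj v (hSLle hv) hv'
    rw [LinearMap.add_apply, LinearMap.id_apply, hv0]
    simp
  set W := Γ ⊓ (ℓ ⊔ C) with hW
  have hWC : W ⊓ C = ⊥ := by
    have h1 : W ⊓ C ≤ Γ ⊓ C := inf_le_inf_right C inf_le_left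
    rw [hΓC] at h1
    exact le_bot_iff.mp h1
  have e1 := Submodule.finrank_sup_add_finrank_inf_eq W C
  rw [hWC] at e1
  simp only [finrank_bot, add_zero] at e1
  have h2 : W ⊔ C ≤ ℓ ⊔ C := sup_le (le_trans inf_le_right le_rfl) le_sup_right
  have h3 : Module.finrank ℂ ↥(W ⊔ C) ≤ Module.finrank ℂ ↥(ℓ ⊔ C) :=
    Submodule.finrank_mono h2
  have e2 := Submodule.finrank_sup_add_finrank_inf_eq ℓ C
  have h4 : Module.finrank ℂ ↥(ℓ ⊔ C) ≤ i + Module.finrank ℂ C := by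
    omega
  omega
end
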